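/- arXiv:2006.14606 — 2 statements merged into one kernel-verified Lean document; each statement's English description precedes it below -/
import Mathlib

section
/- Let $A \in \mathbb{R}^{n \times D}$, $B \in \mathbb{R}^{m \times D}$ with $m \le D$, suppose $BB^\top$ is invertible, and let $\lambda, \tau > 0$. Then $A - \frac{1}{l} A B^\top \left( \frac{1}{l} BB^\top \right)^{-1} \left( I - e^{-\lambda \frac{1}{l} BB^\top \tau} \right) B = A \, e^{-\lambda \frac{1}{l} B^\top B \tau}$ for any $l > 0$. -/
open Matrix

/-- Frobenius norm of a real matrix. -/
noncomputable def frobNorm {m n : ℕ} (A : Matrix (Fin m) (Fin n) ℝ) : ℝ :=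
  Real.sqrt (∑ i, ∑ j, (A i j)^2)

/-- Operator (spectral) norm of a real matrix, i.e. the `ℓ²→ℓ²` operator norm. -/
noncomputable def opNorm {m n : ℕ} (A : Matrix (Fin m) (Fin n) ℝ) : ℝ :=
  ‖LinearMap.toContinuousLinearMap (Matrix.toEuclideanLin A)‖

/-!
Write `P = Bᵀ (B Bᵀ)⁻¹ B`. Since `P Bᵀ = Bᵀ`, the matrix `1 - P` annihilates `Bᵀ B`, hence
`(1 - P) e^{c BᵀB} = 1 - P`; and `B` intertwines `Bᵀ B` with `B Bᵀ`, hence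
`B e^{c BᵀB} = e^{c BBᵀ} B`. Splitting `A e^{c BᵀB} = A (1 - P) e^{c BᵀB} + A P e^{c BᵀB}`
and applying these two facts gives the identity.
-/

namespace Matrix

open NormedSpace

variable {𝕂 : Type*} [RCLike 𝕂]

section Intertwining

attribute [local instance] Matrix.linftyOpNormedRing Matrix.linftyOpNormedAlgebra

variable {m n : Type*} [Fintype m] [DecidableEq m] [Fintype n] [DecidableEq n]

theorem mul_exp_eq_exp_mul_of_mul_eq {C : Matrix m n 𝕂} {M : Matrix n n 𝕂}
    {N : Matrix m m 𝕂} (h : C * M = N * C) : C * exp M = exp N * C := by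
  have hpow (k : ℕ) : C * M ^ k = N ^ k * C := by
    induction k with
    | zero => simp
    | succ k ih => rw [pow_succ, ← Matrix.mul_assoc, ih, Matrix.mul_assoc, h, ← Matrix.mul_assoc,
        pow_succ]
  have hM := (expSeries_summable' (𝕂 := 𝕂) M).hasSum.map (mulLeftLinearMap n 𝕂 C)
    (continuous_const.matrix_mul continuous_id)
  have hN := (expSeries_summable' (𝕂 := 𝕂) N).hasSum.map (mulRightLinearMap m 𝕂 C)
    (continuous_id.matrix_mul continuous_const)
  rw [exp_eq_tsum 𝕂, exp_eq_tsum 𝕂]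
  refine hM.unique ?_
  convert hN using 1
  · funext k
    simp [hpow]
  · rfl

theorem mul_exp_eq_self_of_mul_eq_zero {Q : Matrix m n 𝕂} {M : Matrix n n 𝕂} (h : Q * M = 0) :
    Q * exp M = Q := by
  simpa using mul_exp_eq_exp_mul_of_mul_eq (N := 0) (h.trans (Matrix.zero_mul Q).symm)

end Intertwining

theorem sub_mul_inv_mul_one_sub_exp_mul_eq_mul_exp {k m d : Type*} [Fintype m] [DecidableEq m]
    [Fintype d] [DecidableEq d] (A : Matrix k d 𝕂) (B : Matrix m d 𝕂) (C : Matrix d m 𝕂)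
    (hBC : IsUnit (B * C)) (c : 𝕂) :
    A - A * C * (B * C)⁻¹ * (1 - exp (c • (B * C))) * B = A * exp (c • (C * B)) := by
  set P := C * (B * C)⁻¹ * B
  have hPC : P * C = C := by
    rw [Matrix.mul_assoc, Matrix.mul_assoc,
      nonsing_inv_mul _ ((isUnit_iff_isUnit_det _).mp hBC), Matrix.mul_one]
  have hP : (1 - P) * (c • (C * B)) = 0 := by
    rw [Matrix.mul_smul, ← Matrix.mul_assoc, Matrix.sub_mul, hPC, Matrix.one_mul, sub_self,
      Matrix.zero_mul, smul_zero]
  have hB : B * exp (c • (C * B)) = exp (c • (B * C)) * B :=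
    mul_exp_eq_exp_mul_of_mul_eq (by rw [Matrix.mul_smul, Matrix.smul_mul, Matrix.mul_assoc])
  calc A - A * C * (B * C)⁻¹ * (1 - exp (c • (B * C))) * B
      = A * (1 - P) + A * C * (B * C)⁻¹ * (exp (c • (B * C)) * B) := by
        simp only [P, Matrix.mul_sub, Matrix.sub_mul, Matrix.mul_one, Matrix.mul_assoc]
        abel
    _ = A * ((1 - P) * exp (c • (C * B))) + A * (P * exp (c • (C * B))) := by
        rw [mul_exp_eq_self_of_mul_eq_zero hP, ← hB]
        simp only [P, Matrix.mul_assoc]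
    _ = A * exp (c • (C * B)) := by
        rw [← Matrix.mul_add, ← Matrix.add_mul, sub_add_cancel, Matrix.one_mul]

end Matrix

theorem stmt6_general {n m D : ℕ}
    (A : Matrix (Fin n) (Fin D) ℝ) (B : Matrix (Fin m) (Fin D) ℝ)
    (hinv : IsUnit (B * Bᵀ)) (lam τ l : ℝ)
    (hl : 0 < l) :
    A - ((1/l) • (A * Bᵀ)) * ((1/l : ℝ) • (B * Bᵀ))⁻¹ *
        (1 - NormedSpace.exp ((-(lam * τ)) • ((1/l : ℝ) • (B * Bᵀ)))) * B
      = A * NormedSpace.exp ((-(lam * τ)) • ((1/l : ℝ) • (Bᵀ * B))) := by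
  have hl' : (1 / l : ℝ) ≠ 0 := by positivity
  have hscale : (1 / l) • (A * Bᵀ) * ((1 / l : ℝ) • (B * Bᵀ))⁻¹ = A * Bᵀ * (B * Bᵀ)⁻¹ := by
    have := invertibleOfNonzero hl'
    rw [inv_smul _ _ ((isUnit_iff_isUnit_det _).mp hinv), Matrix.smul_mul, Matrix.mul_smul,
      smul_smul, invOf_eq_inv, mul_inv_cancel₀ hl', one_smul]
  rw [hscale, smul_smul, smul_smul]
  exact sub_mul_inv_mul_one_sub_exp_mul_eq_mul_exp A B Bᵀ hinv _

theorem stmt6 {n m D : ℕ} (hmD : m ≤ D)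
    (A : Matrix (Fin n) (Fin D) ℝ) (B : Matrix (Fin m) (Fin D) ℝ)
    (hinv : IsUnit (B * Bᵀ)) (lam τ l : ℝ)
    (hlam : 0 < lam) (hτ : 0 < τ) (hl : 0 < l) :
    A - ((1/l) • (A * Bᵀ)) * ((1/l : ℝ) • (B * Bᵀ))⁻¹ *
        (1 - NormedSpace.exp ((-(lam * τ)) • ((1/l : ℝ) • (B * Bᵀ)))) * B
      = A * NormedSpace.exp ((-(lam * τ)) • ((1/l : ℝ) • (Bᵀ * B))) :=
  stmt6_general A B hinv lam τ l hl
end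

section
/- Let $A, B \in \mathbb{R}^{m \times m}$ be symmetric positive semi-definite matrices and $s > 0$. Then $\|e^{-sA} - e^{-sB}\|_{op} \le s \, \|A - B\|_{op} \, e^{-s \min(\lambda_{\min}(A), \lambda_{\min}(B))}$; in particular $\|e^{-sA} - e^{-sB}\|_{op} \le s \|A - B\|_{op}$. -/
open Matrix

/-!
Duhamel's formula writes `e^{sX} - e^{sY}` as `∫₀ˢ e^{tX} (X - Y) e^{(s-t)Y} dt`. For `X = -A`,
`Y = -B` with `A`, `B` symmetric, the spectral theorem gives `‖e^{-tA}‖ ≤ e^{-tc}` whenever every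
eigenvalue of `A` is at least `c`, so the integrand is bounded by `‖A - B‖ e^{-sc}`. Positive
semi-definiteness makes `c = min(λ_min(A), λ_min(B))` nonnegative, which gives the second bound.
-/

section Duhamel

open NormedSpace

variable {𝔸 : Type*} [NormedRing 𝔸] [NormedAlgebra ℝ 𝔸] [CompleteSpace 𝔸]

theorem hasDerivAt_exp_smul_mul_exp_sub_smul (X Y : 𝔸) (s t : ℝ) :
    HasDerivAt (fun u : ℝ => exp (u • X) * exp ((s - u) • Y))
      (exp (t • X) * (X - Y) * exp ((s - t) • Y)) t := by
  have hY : HasDerivAt (fun u : ℝ => exp ((s - u) • Y)) (-(Y * exp ((s - t) • Y))) t := by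
    simpa [Function.comp_def] using
      (hasDerivAt_exp_smul_const' Y (s - t)).scomp t ((hasDerivAt_id t).const_sub s)
  refine ((hasDerivAt_exp_smul_const X t).mul hY).congr_deriv ?_
  noncomm_ring

theorem exp_smul_sub_exp_smul_eq_integral (X Y : 𝔸) (s : ℝ) :
    exp (s • X) - exp (s • Y) =
      ∫ t in (0 : ℝ)..s, exp (t • X) * (X - Y) * exp ((s - t) • Y) := by
  have hcont : Continuous fun t : ℝ => exp (t • X) * (X - Y) * exp ((s - t) • Y) :=
    continuous_iff_continuousAt.2 fun t =>
      ((hasDerivAt_exp_smul_const X t).continuousAt.mul continuousAt_const).mul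
        ((hasDerivAt_exp_smul_const Y (s - t)).continuousAt.comp
          (continuous_const.sub continuous_id).continuousAt)
  rw [intervalIntegral.integral_eq_sub_of_hasDerivAt
    (fun t _ => hasDerivAt_exp_smul_mul_exp_sub_smul X Y s t) (hcont.intervalIntegrable 0 s)]
  simp

theorem norm_exp_smul_sub_exp_smul_le (X Y : 𝔸) {s c : ℝ} (hs : 0 ≤ s)
    (hX : ∀ t ∈ Set.Icc 0 s, ‖exp (t • X)‖ ≤ Real.exp (t * c))
    (hY : ∀ t ∈ Set.Icc 0 s, ‖exp (t • Y)‖ ≤ Real.exp (t * c)) :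
    ‖exp (s • X) - exp (s • Y)‖ ≤ s * ‖X - Y‖ * Real.exp (s * c) := by
  have hbound : ∀ t ∈ Set.uIoc 0 s,
      ‖exp (t • X) * (X - Y) * exp ((s - t) • Y)‖ ≤ ‖X - Y‖ * Real.exp (s * c) := by
    rintro t ⟨ht0, hts⟩
    rw [min_eq_left hs] at ht0
    rw [max_eq_right hs] at hts
    calc ‖exp (t • X) * (X - Y) * exp ((s - t) • Y)‖
        ≤ ‖exp (t • X)‖ * ‖X - Y‖ * ‖exp ((s - t) • Y)‖ := norm_mul₃_le
      _ ≤ Real.exp (t * c) * ‖X - Y‖ * Real.exp ((s - t) * c) := by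
        gcongr
        · exact hX t ⟨ht0.le, hts⟩
        · exact hY (s - t) ⟨by linarith, by linarith⟩
      _ = ‖X - Y‖ * Real.exp (s * c) := by
        rw [mul_right_comm, ← Real.exp_add]
        ring_nf
  rw [exp_smul_sub_exp_smul_eq_integral]
  simpa [abs_of_nonneg hs, mul_comm s, mul_assoc] using
    intervalIntegral.norm_integral_le_of_norm_le_const hbound

end Duhamel

section L2OpNorm

open scoped Matrix.Norms.L2Operator

variable {n 𝕜 : Type*} [RCLike 𝕜] [Fintype n] [DecidableEq n]

lemma Matrix.IsHermitian.l2_opNorm_cfc_le {A : Matrix n n 𝕜} (hA : A.IsHermitian) (f : ℝ → ℝ)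
    {c : ℝ} (hc : 0 ≤ c) (hf : ∀ i, |f (hA.eigenvalues i)| ≤ c) : ‖cfc f A‖ ≤ c := by
  rw [hA.cfc_eq, IsHermitian.cfc, Unitary.conjStarAlgAut_apply, mul_assoc,
    CStarRing.norm_coe_unitary_mul,
    CStarRing.norm_mul_mem_unitary _ (Unitary.star_mem hA.eigenvectorUnitary.2),
    l2_opNorm_diagonal, pi_norm_le_iff_of_nonneg hc]
  intro i
  simpa using hf i

lemma Matrix.IsHermitian.l2_opNorm_exp_neg_smul_le {A : Matrix n n ℝ} (hA : A.IsHermitian)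
    {t c : ℝ} (ht : 0 ≤ t) (hc : ∀ i, c ≤ hA.eigenvalues i) :
    ‖NormedSpace.exp ((-t) • A)‖ ≤ Real.exp (-t * c) := by
  rw [← CFC.real_exp_eq_normedSpace_exp,
    ← cfc_comp_smul (-t) Real.exp A Real.continuous_exp.continuousOn hA.isSelfAdjoint]
  refine hA.l2_opNorm_cfc_le _ (Real.exp_pos _).le fun i => ?_
  rw [abs_of_pos (Real.exp_pos _), Real.exp_le_exp, smul_eq_mul]
  nlinarith [hc i]

lemma Matrix.IsHermitian.l2_opNorm_exp_neg_smul_sub_le {A B : Matrix n n ℝ}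
    (hA : A.IsHermitian) (hB : B.IsHermitian) {s c : ℝ} (hs : 0 ≤ s)
    (hcA : ∀ i, c ≤ hA.eigenvalues i) (hcB : ∀ i, c ≤ hB.eigenvalues i) :
    ‖NormedSpace.exp ((-s) • A) - NormedSpace.exp ((-s) • B)‖ ≤
      s * ‖A - B‖ * Real.exp (-s * c) := by
  have hneg : ∀ {C : Matrix n n ℝ} (hC : C.IsHermitian), (∀ i, c ≤ hC.eigenvalues i) →
      ∀ t ∈ Set.Icc 0 s, ‖NormedSpace.exp (t • -C)‖ ≤ Real.exp (t * -c) := fun hC hc t ht => by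
    simpa [smul_neg, neg_smul] using hC.l2_opNorm_exp_neg_smul_le ht.1 hc
  simpa only [smul_neg, neg_smul, neg_sub_neg, norm_sub_rev B A, mul_neg, neg_mul] using
    norm_exp_smul_sub_exp_smul_le (-A) (-B) hs (hneg hA hcA) (hneg hB hcB)

lemma opNorm_eq_l2_opNorm {k l : ℕ} (M : Matrix (Fin k) (Fin l) ℝ) : opNorm M = ‖M‖ := rfl

end L2OpNorm

theorem stmt9 {m : ℕ} (A B : Matrix (Fin m) (Fin m) ℝ)
    (hA : A.PosSemidef) (hB : B.PosSemidef) (s : ℝ) (hs : 0 < s) :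
    opNorm (NormedSpace.exp ((-s) • A) - NormedSpace.exp ((-s) • B)) ≤
      s * opNorm (A - B) *
        Real.exp (-s * min (⨅ i, hA.1.eigenvalues i) (⨅ i, hB.1.eigenvalues i)) ∧
    opNorm (NormedSpace.exp ((-s) • A) - NormedSpace.exp ((-s) • B)) ≤
      s * opNorm (A - B) := by
  set c := min (⨅ i, hA.1.eigenvalues i) (⨅ i, hB.1.eigenvalues i)
  have hcA : ∀ i, c ≤ hA.1.eigenvalues i := fun i =>
    (min_le_left _ _).trans (ciInf_le (Finite.bddBelow_range _) i)
  have hcB : ∀ i, c ≤ hB.1.eigenvalues i := fun i =>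
    (min_le_right _ _).trans (ciInf_le (Finite.bddBelow_range _) i)
  have hc : 0 ≤ c :=
    le_min (Real.iInf_nonneg hA.eigenvalues_nonneg) (Real.iInf_nonneg hB.eigenvalues_nonneg)
  have hbound := IsHermitian.l2_opNorm_exp_neg_smul_sub_le hA.1 hB.1 hs.le hcA hcB
  rw [← opNorm_eq_l2_opNorm, ← opNorm_eq_l2_opNorm] at hbound
  refine ⟨hbound, hbound.trans (mul_le_of_le_one_right (mul_nonneg hs.le (norm_nonneg _)) ?_)⟩
  exact Real.exp_le_one_iff.2 (by nlinarith)
end
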